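/- arXiv:2105.12605 — 2 statements merged into one kernel-verified Lean document; each statement's English description precedes it below -/
import Mathlib

section
/- Let X_N ∈ 𝕏_N and ρ_N = (X_N)_#ρ0, where ρ0 is a finite positive measure absolutely continuous with respect to Lebesgue measure restricted to M. Then the Lagrangian and Eulerian Moreau–Yosida regularizations coincide: ℱ_ε(X_N) = 𝒰_ε(ρ_N), i.e. inf_{σ∈𝕏} ‖X_N − σ‖²_𝕏/(2ε) + 𝒰(σ_#ρ0) = min_{μ∈ℳ₊(ℝ^d)} W₂²(ρ_N, μ)/(2ε) + 𝒰(μ). -/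
open MeasureTheory ENNReal Set Filter
open scoped RealInnerProductSpace Topology

noncomputable section

abbrev Euc (d : ℕ) := EuclideanSpace ℝ (Fin d)

variable {d : ℕ}

/-- The set of couplings (transport plans) between two measures. -/
def Couplings (ρ μ : Measure (Euc d)) : Set (Measure (Euc d × Euc d)) :=
  {γ | γ.map Prod.fst = ρ ∧ γ.map Prod.snd = μ}

/-- Squared L²-Wasserstein distance (`⊤` if no coupling exists). -/
def W2sq (ρ μ : Measure (Euc d)) : ℝ≥0∞ :=
  ⨅ γ ∈ Couplings ρ μ, ∫⁻ p, ENNReal.ofReal (‖p.1 - p.2‖ ^ 2) ∂γ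

-- Internal energy `𝒰(μ) = ∫_M U(dμ/dx)` if `μ ≪ dx⌞M`, `+∞` otherwise.
open Classical in
def intEnergy (M : Set (Euc d)) (U : ℝ → ℝ) (μ : Measure (Euc d)) : EReal :=
  if μ ≪ volume.restrict M then
    ((∫ x in M, U ((μ.rnDeriv (volume.restrict M)) x).toReal : ℝ) : EReal)
  else ⊤

/-- Squared L²(ρ0) distance between two maps. -/
def L2dsq (ρ0 : Measure (Euc d)) (X Y : Euc d → Euc d) : ℝ :=
  ∫ ω, ‖X ω - Y ω‖ ^ 2 ∂ρ0

/-- Membership in `𝕏 = L²_{ρ0}`. -/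
def memX (ρ0 : Measure (Euc d)) (σ : Euc d → Euc d) : Prop :=
  AEMeasurable σ ρ0 ∧ MemLp σ 2 ρ0

/-- Value of the Lagrangian Moreau–Yosida functional at a competitor `σ`. -/
def MYval (M : Set (Euc d)) (U : ℝ → ℝ) (ρ0 : Measure (Euc d)) (ε : ℝ)
    (X σ : Euc d → Euc d) : EReal :=
  ((L2dsq ρ0 X σ / (2 * ε) : ℝ) : EReal) + intEnergy M U (ρ0.map σ)

/-- Lagrangian Moreau–Yosida regularization `ℱ_ε`. -/
def Feps (M : Set (Euc d)) (U : ℝ → ℝ) (ρ0 : Measure (Euc d)) (ε : ℝ)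
    (X : Euc d → Euc d) : EReal :=
  ⨅ σ ∈ {σ | memX ρ0 σ}, MYval M U ρ0 ε X σ

/-- Value of the Eulerian Moreau–Yosida functional at a competitor `μ`. -/
def EMYval (M : Set (Euc d)) (U : ℝ → ℝ) (ε : ℝ) (ρ μ : Measure (Euc d)) : EReal :=
  ((W2sq ρ μ / ENNReal.ofReal (2 * ε) : ℝ≥0∞) : EReal) + intEnergy M U μ

/-- Eulerian Moreau–Yosida regularization `𝒰_ε`. -/
def Ueps (M : Set (Euc d)) (U : ℝ → ℝ) (ε : ℝ) (ρ : Measure (Euc d)) : EReal :=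
  ⨅ μ ∈ {μ : Measure (Euc d) | IsFiniteMeasure μ}, EMYval M U ε ρ μ

/-- Divergence of a vector field. -/
def divg (v : Euc d → Euc d) (x : Euc d) : ℝ :=
  LinearMap.trace ℝ (Euc d) (fderiv ℝ v x).toLinearMap

/-- The pressure `P(r) = r U'(r) − U(r)`. -/
def Pfun (U : ℝ → ℝ) (r : ℝ) : ℝ := r * deriv U r - U r

/-- `P` is a finite partition of `S0`. -/
def IsPartition {N : ℕ} (S0 : Set (Euc d)) (P : Fin N → Set (Euc d)) : Prop :=
  (∀ i j, i ≠ j → Disjoint (P i) (P j)) ∧ (⋃ i, P i) = S0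

/-- A map is constant on each cell of the partition (i.e. belongs to `𝕏_N`). -/
def PConst {N : ℕ} (P : Fin N → Set (Euc d)) (f : Euc d → Euc d) : Prop :=
  ∀ i, ∀ ω ∈ P i, ∀ ω' ∈ P i, f ω = f ω'

/-- Average of a map over a cell — the value of the `L²_{ρ0}`-projection onto `𝕏_N`. -/
def cellAvg (ρ0 : Measure (Euc d)) (A : Set (Euc d)) (Y : Euc d → Euc d) : Euc d :=
  (ρ0 A).toReal⁻¹ • ∫ x in A, Y x ∂ρ0

/-- Laguerre cell of site `i`. -/
def laguerre {N : ℕ} (M : Set (Euc d)) (x : Fin N → Euc d) (w : Fin N → ℝ) (i : Fin N) :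
    Set (Euc d) :=
  {y ∈ M | ∀ j, ‖y - x i‖ ^ 2 + w i ≤ ‖y - x j‖ ^ 2 + w j}

/-- `C^{k,1}` norm on a set (sup of derivatives up to order `k` plus the Lipschitz
seminorm of the `k`-th derivative). -/
def Ck1NormOn {F : Type*} [NormedAddCommGroup F] [NormedSpace ℝ F] (k : ℕ)
    (f : Euc d → F) (s : Set (Euc d)) : ℝ :=
  (∑ i ∈ Finset.range (k + 1), ⨆ x ∈ s, ‖iteratedFDerivWithin ℝ i f s x‖)
    + ⨆ x ∈ s, ⨆ y ∈ s,
        ‖iteratedFDerivWithin ℝ k f s x - iteratedFDerivWithin ℝ k f s y‖ / ‖x - y‖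

/-- `f` is of class `C^{k,1}` on `s`. -/
def IsCk1On {F : Type*} [NormedAddCommGroup F] [NormedSpace ℝ F] (k : ℕ)
    (f : Euc d → F) (s : Set (Euc d)) : Prop :=
  ContDiffOn ℝ k f s ∧ ∃ K : NNReal, LipschitzOnWith K (iteratedFDerivWithin ℝ k f s) s




section Helpers

lemma eq_univ_or_nonempty_compl {α : Type*} (A : Set α) : A = univ ∨ (Aᶜ).Nonempty := by
  rcases Set.eq_empty_or_nonempty Aᶜ with h | h
  · left; rwa [compl_empty_iff] at h
  · right; exact h

lemma cdf_level (ν : Measure ℝ) [IsFiniteMeasure ν] [NullSingletonClass ν] {c : ℝ≥0∞}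
    (hc : c ≤ ν univ) : ν {ω | ν (Iic ω) ≤ c} = c := by
  set F : ℝ → ℝ≥0∞ := fun ω => ν (Iic ω) with hF
  have hFmono : Monotone F := fun a b hab => measure_mono (Iic_subset_Iic.2 hab)
  set A : Set ℝ := {ω | F ω ≤ c} with hA
  have hAlower : ∀ ⦃a b : ℝ⦄, a ≤ b → b ∈ A → a ∈ A := fun a b hab hb =>
    le_trans (hFmono hab) hb
  rcases eq_univ_or_nonempty_compl A with hAu | hzz
  · -- A = univ : c = ν univ
    have h1 : ν univ ≤ c := by
      have hU : (⋃ n : ℕ, Iic (n : ℝ)) = univ := by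
        ext ω; simp only [mem_iUnion, mem_Iic, mem_univ, iff_true]
        obtain ⟨n, hn⟩ := exists_nat_ge ω; exact ⟨n, hn⟩
      have hmono : Monotone fun n : ℕ => Iic (n : ℝ) := fun a b hab =>
        Iic_subset_Iic.2 (Nat.cast_le.2 hab)
      have := Directed.measure_iUnion (μ := ν) (s := fun n : ℕ => Iic (n : ℝ))
        hmono.directed_le
      rw [hU] at this
      rw [this]
      exact iSup_le fun n => by
        have : (n : ℝ) ∈ A := hAu ▸ mem_univ _
        exact this
    have : ν A = ν univ := by rw [hAu]
    rw [this]; exact le_antisymm h1 hc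
  · -- ∃ z ∉ A
    obtain ⟨z, hzA⟩ := hzz
    rcases Set.eq_empty_or_nonempty A with hAe | hAne
    · -- A = ∅ : c = 0
      have h0 : c = 0 := by
        have hlt : ∀ n : ℕ, c ≤ F (-(n : ℝ)) := fun n => by
          have : (-(n:ℝ)) ∉ A := by rw [hAe]; exact notMem_empty _
          exact le_of_lt (lt_of_not_ge this)
        have hI : (⋂ n : ℕ, Iic (-(n : ℝ))) = ∅ := by
          ext ω; simp only [mem_iInter, mem_Iic, mem_empty_iff_false, iff_false, not_forall]
          obtain ⟨n, hn⟩ := exists_nat_gt (-ω)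
          exact ⟨n, by push_neg; linarith⟩
        have hanti : Antitone fun n : ℕ => Iic (-(n:ℝ)) := fun a b hab =>
          Iic_subset_Iic.2 (neg_le_neg (Nat.cast_le.2 hab))
        have hinf := Directed.measure_iInter (μ := ν) (s := fun n : ℕ => Iic (-(n : ℝ)))
          (fun n => measurableSet_Iic.nullMeasurableSet)
          hanti.directed_ge ⟨0, measure_ne_top ν _⟩
        rw [hI, measure_empty] at hinf
        have : c ≤ ⨅ n : ℕ, ν (Iic (-(n:ℝ))) := le_iInf hlt
        rw [← hinf] at this
        exact le_antisymm this zero_le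
      rw [hAe, h0, measure_empty]
    · -- main case
      have hbdd : BddAbove A := ⟨z, fun a ha => by
        by_contra hle; exact hzA (hAlower (le_of_not_ge hle) ha)⟩
      set b := sSup A with hb
      have hIio : Iio b ⊆ A := fun ω hω => by
        obtain ⟨a, haA, hlt⟩ := exists_lt_of_lt_csSup hAne hω
        exact hAlower (le_of_lt hlt) haA
      have hIic : A ⊆ Iic b := fun a ha => le_csSup hbdd ha
      have hio : ν (Iio b) = ν (Iic b) := measure_congr (Iio_ae_eq_Iic (a := b))
      have hνA : ν A = ν (Iic b) :=
        le_antisymm (measure_mono hIic) (hio ▸ measure_mono hIio)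
      rw [hνA]
      refine le_antisymm ?_ ?_
      · -- ν (Iic b) ≤ c
        rw [← hio]
        have hU : Iio b = ⋃ n : ℕ, Iic (b - 1 / (n + 1)) := by
          ext ω
          simp only [mem_Iio, mem_iUnion, mem_Iic]
          constructor
          · intro h
            obtain ⟨n, hn⟩ := exists_nat_one_div_lt (sub_pos.2 h)
            exact ⟨n, by push_cast at hn ⊢; linarith⟩
          · rintro ⟨n, hn⟩
            have : 0 < 1 / ((n : ℝ) + 1) := by positivity
            linarith
        have hmono : Monotone fun n : ℕ => Iic (b - 1 / ((n:ℝ) + 1)) := by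
          intro a b' hab
          apply Iic_subset_Iic.2
          have : (a:ℝ) ≤ b' := Nat.cast_le.2 hab
          have h1 : 1 / ((b':ℝ) + 1) ≤ 1 / ((a:ℝ) + 1) := by
            apply one_div_le_one_div_of_le <;> linarith
          linarith
        rw [hU, Directed.measure_iUnion hmono.directed_le]
        exact iSup_le fun n => hIio (by
          simp only [mem_Iio]
          have : 0 < 1 / ((n : ℝ) + 1) := by positivity
          linarith)
      · -- c ≤ ν (Iic b)
        have hI : Iic b = ⋂ n : ℕ, Iic (b + 1 / (n + 1)) := by
          ext ω
          simp only [mem_Iic, mem_iInter]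
          constructor
          · intro h n
            have : 0 < 1 / ((n : ℝ) + 1) := by positivity
            linarith
          · intro h
            by_contra hlt
            obtain ⟨n, hn⟩ := exists_nat_one_div_lt (sub_pos.2 (lt_of_not_ge hlt))
            have := h n; push_cast at hn this ⊢; linarith
        have hanti : Antitone fun n : ℕ => Iic (b + 1 / ((n:ℝ) + 1)) := by
          intro a b' hab
          apply Iic_subset_Iic.2
          have : (a:ℝ) ≤ b' := Nat.cast_le.2 hab
          have h1 : 1 / ((b':ℝ) + 1) ≤ 1 / ((a:ℝ) + 1) := by
            apply one_div_le_one_div_of_le <;> linarith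
          linarith
        rw [hI, Directed.measure_iInter (fun n => measurableSet_Iic.nullMeasurableSet)
          hanti.directed_ge ⟨0, measure_ne_top ν _⟩]
        refine le_iInf fun n => ?_
        have hnb : b + 1 / ((n:ℝ) + 1) ∉ A := fun hmem => by
          have := le_csSup hbdd hmem
          have h0 : 0 < 1 / ((n : ℝ) + 1) := by positivity
          linarith
        exact le_of_lt (lt_of_not_ge hnb)

lemma measure_union_null_right {α : Type*} [MeasurableSpace α] (ν : Measure α) {s t : Set α}
    (ht : ν t = 0) : ν (s ∪ t) = ν s :=
  le_antisymm (le_trans (measure_union_le s t) (by rw [ht, add_zero]))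
    (measure_mono subset_union_left)

lemma exists_map_real (ν μ : Measure ℝ) [IsFiniteMeasure ν] [IsFiniteMeasure μ] [NullSingletonClass ν]
    (h : ν univ = μ univ) : ∃ f : ℝ → ℝ, Measurable f ∧ ν.map f = μ := by
  rcases eq_or_ne (μ univ) 0 with hm0 | hm0
  · have hν0 : ν = 0 := Measure.measure_univ_eq_zero.1 (h.trans hm0)
    have hμ0 : μ = 0 := Measure.measure_univ_eq_zero.1 hm0
    exact ⟨id, measurable_id, by rw [hν0, hμ0, Measure.map_zero]⟩
  set m := μ univ with hm
  set F : ℝ → ℝ≥0∞ := fun ω => ν (Iic ω) with hFdef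
  have hFmono : Monotone F := fun a b hab => measure_mono (Iic_subset_Iic.2 hab)
  have hFmeas : Measurable F := hFmono.measurable
  set G : ℝ≥0∞ → ℝ := fun t => sInf {x : ℝ | t ≤ μ (Iic x)} with hGdef
  -- lower bound control
  have hinf0 : (⨅ n : ℕ, μ (Iic (-(n : ℝ)))) = 0 := by
    have hI : (⋂ n : ℕ, Iic (-(n : ℝ))) = ∅ := by
      ext ω; simp only [mem_iInter, mem_Iic, mem_empty_iff_false, iff_false, not_forall]
      obtain ⟨n, hn⟩ := exists_nat_gt (-ω)
      exact ⟨n, by push_neg; linarith⟩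
    have hanti : Antitone fun n : ℕ => Iic (-(n:ℝ)) := fun a b hab =>
      Iic_subset_Iic.2 (neg_le_neg (Nat.cast_le.2 hab))
    have hinf := Directed.measure_iInter (μ := μ) (s := fun n : ℕ => Iic (-(n : ℝ)))
      (fun n => measurableSet_Iic.nullMeasurableSet)
      hanti.directed_ge ⟨0, measure_ne_top μ _⟩
    rw [hI, measure_empty] at hinf
    exact hinf.symm
  have hbdd : ∀ {t : ℝ≥0∞}, 0 < t → BddBelow {x : ℝ | t ≤ μ (Iic x)} := by
    intro t ht
    have : (⨅ n : ℕ, μ (Iic (-(n : ℝ)))) < t := by rw [hinf0]; exact ht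
    obtain ⟨n, hn⟩ := iInf_lt_iff.1 this
    refine ⟨-(n:ℝ), fun y hy => ?_⟩
    by_contra hlt
    push_neg at hlt
    exact absurd (le_trans hy (measure_mono (Iic_subset_Iic.2 (le_of_lt hlt))))
      (not_le.2 hn)
  have hne : ∀ {t : ℝ≥0∞}, t < m → {x : ℝ | t ≤ μ (Iic x)}.Nonempty := by
    intro t ht
    have hU : (⋃ n : ℕ, Iic (n : ℝ)) = univ := by
      ext ω; simp only [mem_iUnion, mem_Iic, mem_univ, iff_true]
      obtain ⟨n, hn⟩ := exists_nat_ge ω; exact ⟨n, hn⟩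
    have hmono : Monotone fun n : ℕ => Iic (n : ℝ) := fun a b hab =>
      Iic_subset_Iic.2 (Nat.cast_le.2 hab)
    have hsup := Directed.measure_iUnion (μ := μ) (s := fun n : ℕ => Iic (n : ℝ))
      hmono.directed_le
    rw [hU] at hsup
    have : t < ⨆ n : ℕ, μ (Iic (n : ℝ)) := by rw [← hsup]; exact ht
    obtain ⟨n, hn⟩ := lt_iSup_iff.1 this
    exact ⟨(n : ℝ), le_of_lt hn⟩
  have hGF : ∀ (x : ℝ) (t : ℝ≥0∞), 0 < t → t < m → (G t ≤ x ↔ t ≤ μ (Iic x)) := by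
    intro x t ht0 htm
    constructor
    · intro hGx
      have key : ∀ n : ℕ, t ≤ μ (Iic (x + 1 / ((n:ℝ) + 1))) := by
        intro n
        have h1 : G t < x + 1 / ((n:ℝ) + 1) := by
          have : 0 < 1 / ((n : ℝ) + 1) := by positivity
          linarith
        obtain ⟨a, haS, ha⟩ := (csInf_lt_iff (hbdd ht0) (hne htm)).1 h1
        exact le_trans haS (measure_mono (Iic_subset_Iic.2 (le_of_lt ha)))
      have hI : Iic x = ⋂ n : ℕ, Iic (x + 1 / ((n:ℝ) + 1)) := by
        ext ω
        simp only [mem_Iic, mem_iInter]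
        constructor
        · intro hω n
          have : 0 < 1 / ((n : ℝ) + 1) := by positivity
          linarith
        · intro hω
          by_contra hlt
          obtain ⟨n, hn⟩ := exists_nat_one_div_lt (sub_pos.2 (lt_of_not_ge hlt))
          have := hω n; push_cast at hn; linarith
      have hanti : Antitone fun n : ℕ => Iic (x + 1 / ((n:ℝ) + 1)) := by
        intro a b' hab
        apply Iic_subset_Iic.2
        have : (a:ℝ) ≤ b' := Nat.cast_le.2 hab
        have h1 : 1 / ((b':ℝ) + 1) ≤ 1 / ((a:ℝ) + 1) := by
          apply one_div_le_one_div_of_le <;> linarith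
        linarith
      have := Directed.measure_iInter (μ := μ) (s := fun n : ℕ => Iic (x + 1 / ((n:ℝ) + 1)))
        (fun n => measurableSet_Iic.nullMeasurableSet) hanti.directed_ge
        ⟨0, measure_ne_top μ _⟩
      rw [← hI] at this
      rw [this]
      exact le_iInf key
    · intro hx
      exact csInf_le (hbdd ht0) hx
  set B : Set ℝ := {ω | F ω ≠ 0 ∧ F ω ≠ m} with hBdef
  have hBmeas : MeasurableSet B := by
    have : B = F ⁻¹' ({0}ᶜ ∩ {m}ᶜ) := by ext ω; simp [hBdef]
    rw [this]
    exact hFmeas (((measurableSet_singleton 0).compl).inter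
      ((measurableSet_singleton m).compl))
  set f : ℝ → ℝ := fun ω => if ω ∈ B then G (F ω) else 0 with hfdef
  have hFle : ∀ ω, F ω ≤ m := fun ω => le_trans (measure_mono (subset_univ _)) (le_of_eq h)
  have honB : ∀ x : ℝ, ∀ ω ∈ B, (f ω ≤ x ↔ F ω ≤ μ (Iic x)) := by
    intro x ω hω
    have h0 : 0 < F ω := pos_iff_ne_zero.2 hω.1
    have hlt : F ω < m := lt_of_le_of_ne (hFle ω) hω.2
    have : f ω = G (F ω) := if_pos hω
    rw [this]
    exact hGF x (F ω) h0 hlt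
  have hset : ∀ x : ℝ, f ⁻¹' (Iic x) =
      (B ∩ F ⁻¹' (Iic (μ (Iic x)))) ∪ (Bᶜ ∩ {ω : ℝ | (0:ℝ) ≤ x}) := by
    intro x
    ext ω
    by_cases hω : ω ∈ B
    · simp only [mem_preimage, mem_Iic, mem_union, mem_inter_iff, hω, true_and,
        mem_compl_iff, not_true, false_and, or_false, mem_setOf_eq]
      exact honB x ω hω
    · have : f ω = 0 := if_neg hω
      simp only [mem_preimage, mem_Iic, this, mem_union, mem_inter_iff, hω, false_and,
        mem_compl_iff, not_false_iff, true_and, false_or, mem_setOf_eq]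
  have hfmeas : Measurable f := by
    apply measurable_of_Iic
    intro x
    rw [hset x]
    exact (hBmeas.inter (hFmeas measurableSet_Iic)).union
      (hBmeas.compl.inter (MeasurableSet.const _))
  -- Bᶜ is ν-null
  have hB0 : ν Bᶜ = 0 := by
    have hsub : Bᶜ ⊆ {ω : ℝ | F ω ≤ 0} ∪ {ω : ℝ | F ω = m} := by
      intro ω hω
      simp only [hBdef, mem_compl_iff, mem_setOf_eq, not_and_or, not_not] at hω
      rcases hω with h1 | h2
      · exact Or.inl (le_of_eq h1)
      · exact Or.inr h2
    have h1 : ν {ω : ℝ | F ω ≤ 0} = 0 := by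
      have := cdf_level ν (c := 0) zero_le
      simpa using this
    have h2 : ν {ω : ℝ | F ω = m} = 0 := by
      have hlt : ν {ω : ℝ | F ω < m} = m := by
        refine le_antisymm (le_trans (measure_mono (subset_univ _)) (le_of_eq h)) ?_
        refine le_of_forall_lt ?_
        intro c hc
        obtain ⟨c', hc1, hc2⟩ := exists_between hc
        have hcl : ν {ω : ℝ | F ω ≤ c'} = c' := cdf_level ν (le_trans (le_of_lt hc2) (le_of_eq h.symm))
        calc c < c' := hc1
        _ = ν {ω : ℝ | F ω ≤ c'} := hcl.symm
        _ ≤ ν {ω : ℝ | F ω < m} := measure_mono (fun ω hω => lt_of_le_of_lt hω hc2)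
      have hmeas : MeasurableSet {ω : ℝ | F ω < m} := hFmeas measurableSet_Iio
      have hcompl : ν {ω : ℝ | F ω < m}ᶜ = 0 := by
        rw [measure_compl hmeas (measure_ne_top _ _), h, hlt, tsub_self]
      refine measure_mono_null ?_ hcompl
      intro ω hω
      simp only [mem_compl_iff, mem_setOf_eq, not_lt]
      exact le_of_eq (id (Eq.symm hω))
    exact measure_mono_null hsub (measure_union_null h1 h2)
  refine ⟨f, hfmeas, ?_⟩
  have : IsFiniteMeasure (ν.map f) :=
    ⟨by rw [Measure.map_apply hfmeas MeasurableSet.univ]; exact measure_lt_top ν _⟩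
  apply Measure.ext_of_Iic
  intro x
  rw [Measure.map_apply hfmeas measurableSet_Iic, hset x]
  have hnull : ν (Bᶜ ∩ {ω : ℝ | (0:ℝ) ≤ x}) = 0 :=
    measure_mono_null inter_subset_left hB0
  rw [measure_union_null_right ν hnull]
  have hSB : ν (B ∩ F ⁻¹' (Iic (μ (Iic x)))) = ν {ω : ℝ | F ω ≤ μ (Iic x)} := by
    refine le_antisymm (measure_mono inter_subset_right) ?_
    have : {ω : ℝ | F ω ≤ μ (Iic x)} ⊆ (B ∩ F ⁻¹' (Iic (μ (Iic x)))) ∪ Bᶜ := by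
      intro ω hω
      by_cases hB : ω ∈ B
      · exact Or.inl ⟨hB, hω⟩
      · exact Or.inr hB
    exact le_trans (measure_mono this) (le_of_eq (measure_union_null_right ν hB0))
  rw [hSB, cdf_level ν (le_trans (measure_mono (subset_univ _)) (le_of_eq h.symm))]

lemma exists_map_euc (ν μ : Measure (Euc d)) [IsFiniteMeasure ν] [IsFiniteMeasure μ]
    (hν : ∀ y : Euc d, ν {y} = 0) (h : ν univ = μ univ) :
    ∃ T : Euc d → Euc d, Measurable T ∧ ν.map T = μ := by
  have : NullSingletonClass ν := ⟨hν⟩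
  set e : Euc d → ℝ := MeasureTheory.embeddingReal (Euc d) with he
  have hemb : MeasurableEmbedding e := MeasureTheory.measurableEmbedding_embeddingReal _
  set ν' := ν.map e with hν'
  set μ' := μ.map e with hμ'
  have hfin1 : IsFiniteMeasure ν' :=
    ⟨by rw [hν', Measure.map_apply hemb.measurable MeasurableSet.univ]; exact measure_lt_top _ _⟩
  have hfin2 : IsFiniteMeasure μ' :=
    ⟨by rw [hμ', Measure.map_apply hemb.measurable MeasurableSet.univ]; exact measure_lt_top _ _⟩
  have hnoat : NullSingletonClass ν' := by
    refine ⟨fun y => ?_⟩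
    rw [hν', Measure.map_apply hemb.measurable (measurableSet_singleton y)]
    have : (e ⁻¹' {y}).Subsingleton := fun a ha b hb =>
      hemb.injective (ha.trans hb.symm)
    exact this.measure_zero ν
  have hmass : ν' univ = μ' univ := by
    rw [hν', hμ', Measure.map_apply hemb.measurable MeasurableSet.univ,
      Measure.map_apply hemb.measurable MeasurableSet.univ, preimage_univ, h]
  obtain ⟨f, hf, hmap⟩ := exists_map_real ν' μ' hmass
  obtain ⟨g, hg, hge⟩ := hemb.exists_measurable_extend measurable_id
    (fun _ => ⟨(0 : Euc d)⟩)
  refine ⟨g ∘ f ∘ e, (hg.comp hf).comp hemb.measurable, ?_⟩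
  have : ν.map (g ∘ f ∘ e) = ((ν.map e).map f).map g := by
    rw [Measure.map_map hf hemb.measurable, Measure.map_map hg (hf.comp hemb.measurable)]
  rw [this, ← hν', hmap, hμ', Measure.map_map hg hemb.measurable, hge, Measure.map_id]

lemma exists_sigma (ρ0 : Measure (Euc d)) [IsFiniteMeasure ρ0]
    (hρ : ∀ y : Euc d, ρ0 {y} = 0)
    (g : Euc d → Euc d) (hg : Measurable g) (V : Finset (Euc d))
    (hV : ρ0 {ω | g ω ∉ V} = 0)
    (μ : Measure (Euc d)) [IsFiniteMeasure μ]
    (γ : Measure (Euc d × Euc d))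
    (h1 : γ.map Prod.fst = ρ0.map g) (h2 : γ.map Prod.snd = μ) :
    ∃ σ : Euc d → Euc d, Measurable σ ∧ ρ0.map σ = μ ∧
      ∫⁻ ω, ENNReal.ofReal (‖g ω - σ ω‖ ^ 2) ∂ρ0
        = ∫⁻ p, ENNReal.ofReal (‖p.1 - p.2‖ ^ 2) ∂γ := by
  classical
  set Q : Euc d → Set (Euc d) := fun x => g ⁻¹' {x} with hQdef
  have hQm : ∀ x, MeasurableSet (Q x) := fun x => hg (measurableSet_singleton x)
  set A : Euc d → Set (Euc d × Euc d) := fun x => Prod.fst ⁻¹' {x} with hAdef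
  have hAm : ∀ x, MeasurableSet (A x) := fun x => measurable_fst (measurableSet_singleton x)
  set μx : Euc d → Measure (Euc d) := fun x => (γ.restrict (A x)).map Prod.snd with hμxdef
  have hγfin : IsFiniteMeasure γ := by
    constructor
    have : γ univ = (γ.map Prod.fst) univ := by
      rw [Measure.map_apply measurable_fst MeasurableSet.univ, preimage_univ]
    rw [this, h1, Measure.map_apply hg MeasurableSet.univ, preimage_univ]
    exact measure_lt_top _ _
  have hμxfin : ∀ x, IsFiniteMeasure (μx x) := fun x =>
    ⟨by
      rw [hμxdef, Measure.map_apply measurable_snd MeasurableSet.univ, preimage_univ]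
      exact measure_lt_top _ _⟩
  have hμxapp : ∀ x (s : Set (Euc d)), MeasurableSet s → μx x s = γ (Prod.snd ⁻¹' s ∩ A x) := by
    intro x s hs
    rw [hμxdef, Measure.map_apply measurable_snd hs, Measure.restrict_apply (measurable_snd hs)]
  have hmass : ∀ x, (ρ0.restrict (Q x)) univ = (μx x) univ := by
    intro x
    rw [Measure.restrict_apply MeasurableSet.univ, univ_inter,
      hμxapp x univ MeasurableSet.univ, preimage_univ, univ_inter, hAdef]
    have : γ (Prod.fst ⁻¹' {x}) = (γ.map Prod.fst) {x} :=
      (Measure.map_apply measurable_fst (measurableSet_singleton x)).symm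
    rw [this, h1, Measure.map_apply hg (measurableSet_singleton x)]
  have hatom : ∀ x y, (ρ0.restrict (Q x)) {y} = 0 := by
    intro x y
    rw [Measure.restrict_apply (measurableSet_singleton y)]
    exact measure_mono_null inter_subset_left (hρ y)
  have key : ∀ x : Euc d, ∃ T : Euc d → Euc d, Measurable T ∧
      (ρ0.restrict (Q x)).map T = μx x := by
    intro x
    have := hμxfin x
    exact exists_map_euc (ρ0.restrict (Q x)) (μx x) (hatom x) (hmass x)
  choose T hTmeas hTmap using key
  set R : Set (Euc d) := g ⁻¹' (V : Set (Euc d)) with hRdef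
  have hRm : MeasurableSet R := hg V.measurableSet
  have hRc : ρ0 Rᶜ = 0 := by
    have : Rᶜ = {ω | g ω ∉ V} := by ext ω; simp [hRdef]
    rw [this]; exact hV
  set σ : Euc d → Euc d :=
    fun ω => (∑ x ∈ V, (Q x).indicator (T x) ω) + Rᶜ.indicator g ω with hσdef
  have hσmeas : Measurable σ := by
    apply Measurable.add
    · exact Finset.measurable_sum V fun x _ => (hTmeas x).indicator (hQm x)
    · exact hg.indicator hRm.compl
  have hσon : ∀ x ∈ V, ∀ ω ∈ Q x, σ ω = T x ω := by
    intro x hx ω hω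
    have hgω : g ω = x := hω
    have hωR : ω ∈ R := by rw [hRdef, mem_preimage, hgω]; exact hx
    rw [hσdef]
    simp only
    rw [indicator_of_notMem (by simpa using hωR), add_zero]
    rw [Finset.sum_eq_single x]
    · exact indicator_of_mem hω _
    · intro x' _ hne
      apply indicator_of_notMem
      rw [hQdef]; simp only [mem_preimage, mem_singleton_iff, hgω]
      exact fun hc => hne hc.symm  -- g ω = x' means x = x'
    · intro hc; exact absurd hx hc
  have hσoff : ∀ ω ∉ R, σ ω = g ω := by
    intro ω hω
    rw [hσdef]
    simp only
    rw [indicator_of_mem (by simpa using hω), Finset.sum_eq_zero, zero_add]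
    intro x hx
    apply indicator_of_notMem
    rw [hQdef]; simp only [mem_preimage, mem_singleton_iff]
    intro hc; exact hω (by rw [hRdef, mem_preimage, hc]; exact hx)
  have hdisjQ : (V : Set (Euc d)).PairwiseDisjoint Q := by
    intro x _ y _ hxy
    apply Set.disjoint_left.2
    intro ω hωx hωy
    exact hxy ((hωx : g ω = x).symm.trans (hωy : g ω = y))
  have hdisjA : (V : Set (Euc d)).PairwiseDisjoint A := by
    intro x _ y _ hxy
    apply Set.disjoint_left.2
    intro p hpx hpy
    exact hxy ((hpx : p.1 = x).symm.trans (hpy : p.1 = y))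
  have hRQ : R = ⋃ x ∈ V, Q x := by
    ext ω
    simp only [hRdef, mem_preimage, Finset.coe_sort_coe, mem_iUnion, hQdef,
      mem_singleton_iff, exists_prop, Finset.mem_coe]
    exact ⟨fun hmem => ⟨g ω, hmem, rfl⟩, fun ⟨x, hx, hgx⟩ => by rw [hgx]; exact hx⟩
  set W : Set (Euc d × Euc d) := Prod.fst ⁻¹' (V : Set (Euc d)) with hWdef
  have hWm : MeasurableSet W := measurable_fst V.measurableSet
  have hWc : γ Wᶜ = 0 := by
    have : Wᶜ = Prod.fst ⁻¹' ((V : Set (Euc d))ᶜ) := by ext p; simp [hWdef]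
    rw [this, ← Measure.map_apply measurable_fst V.measurableSet.compl, h1,
      Measure.map_apply hg V.measurableSet.compl]
    have : g ⁻¹' (V : Set (Euc d))ᶜ = {ω | g ω ∉ V} := by ext ω; simp
    rw [this]; exact hV
  have hWA : W = ⋃ x ∈ V, A x := by
    ext p
    simp only [hWdef, mem_preimage, mem_iUnion, hAdef, mem_singleton_iff, exists_prop,
      Finset.mem_coe]
    exact ⟨fun hmem => ⟨p.1, hmem, rfl⟩, fun ⟨x, hx, hgx⟩ => by rw [hgx]; exact hx⟩
  -- the pushforward property
  have hmap : ρ0.map σ = μ := by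
    apply Measure.ext
    intro s hs
    rw [Measure.map_apply hσmeas hs]
    have hsplit : ρ0 (σ ⁻¹' s) = ρ0 (σ ⁻¹' s ∩ R) + ρ0 (σ ⁻¹' s \ R) :=
      (measure_inter_add_diff _ hRm).symm
    have hnull : ρ0 (σ ⁻¹' s \ R) = 0 := measure_mono_null (diff_subset_compl _ _) hRc
    have hint : σ ⁻¹' s ∩ R = ⋃ x ∈ V, (T x ⁻¹' s ∩ Q x) := by
      ext ω
      simp only [mem_inter_iff, mem_preimage, mem_iUnion, exists_prop, Finset.mem_coe]
      constructor
      · rintro ⟨hσs, hωR⟩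
        have hx : g ω ∈ V := hωR
        refine ⟨g ω, hx, ?_, rfl⟩
        rwa [← hσon (g ω) hx ω rfl]
      · rintro ⟨x, hx, hTs, hQx⟩
        have hgω : g ω = x := hQx
        constructor
        · rw [hσon x hx ω hQx]; exact hTs
        · rw [hRdef, mem_preimage, hgω]; exact hx
    have hsum : ρ0 (σ ⁻¹' s ∩ R) = ∑ x ∈ V, μx x s := by
      rw [hint, measure_biUnion_finset
        (hdisjQ.mono_on fun x _ => inter_subset_right)
        (fun x _ => ((hTmeas x) hs).inter (hQm x))]
      refine Finset.sum_congr rfl fun x _ => ?_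
      rw [← hTmap x, Measure.map_apply (hTmeas x) hs,
        Measure.restrict_apply ((hTmeas x) hs)]
    have hμsum : μ s = ∑ x ∈ V, μx x s := by
      rw [← h2, Measure.map_apply measurable_snd hs]
      have hsplit2 : γ (Prod.snd ⁻¹' s) =
          γ (Prod.snd ⁻¹' s ∩ W) + γ (Prod.snd ⁻¹' s \ W) :=
        (measure_inter_add_diff _ hWm).symm
      have hnull2 : γ (Prod.snd ⁻¹' s \ W) = 0 := measure_mono_null (diff_subset_compl _ _) hWc
      have hint2 : Prod.snd ⁻¹' s ∩ W = ⋃ x ∈ V, (Prod.snd ⁻¹' s ∩ A x) := by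
        rw [hWA, inter_iUnion₂]
      rw [hsplit2, hnull2, add_zero, hint2, measure_biUnion_finset
        (hdisjA.mono_on fun x _ => inter_subset_right)
        (fun x _ => (measurable_snd hs).inter (hAm x))]
      refine Finset.sum_congr rfl fun x _ => ?_
      rw [hμxapp x s hs]
    rw [hsplit, hnull, add_zero, hsum, hμsum]
  refine ⟨σ, hσmeas, hmap, ?_⟩
  -- cost identity
  have hcostL : ∫⁻ ω, ENNReal.ofReal (‖g ω - σ ω‖ ^ 2) ∂ρ0
      = ∑ x ∈ V, ∫⁻ y, ENNReal.ofReal (‖x - y‖ ^ 2) ∂(μx x) := by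
    have hsplit := lintegral_add_compl (fun ω => ENNReal.ofReal (‖g ω - σ ω‖ ^ 2)) hRm
      (μ := ρ0)
    have hnull : ∫⁻ ω in Rᶜ, ENNReal.ofReal (‖g ω - σ ω‖ ^ 2) ∂ρ0 = 0 :=
      setLIntegral_measure_zero _ _ hRc
    rw [← hsplit, hnull, add_zero, hRQ, lintegral_biUnion_finset hdisjQ (fun x _ => hQm x)]
    refine Finset.sum_congr rfl fun x hx => ?_
    have hcong : ∫⁻ ω in Q x, ENNReal.ofReal (‖g ω - σ ω‖ ^ 2) ∂ρ0
        = ∫⁻ ω in Q x, ENNReal.ofReal (‖x - T x ω‖ ^ 2) ∂ρ0 := by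
      refine setLIntegral_congr_fun (hQm x) ?_
      intro ω hω
      dsimp only
      rw [hσon x hx ω hω, (hω : g ω = x)]
    rw [hcong, ← hTmap x, lintegral_map ?_ (hTmeas x)]
    exact (((continuous_const.sub continuous_id).norm.pow 2).measurable).ennreal_ofReal
  have hcostR : ∫⁻ p, ENNReal.ofReal (‖p.1 - p.2‖ ^ 2) ∂γ
      = ∑ x ∈ V, ∫⁻ y, ENNReal.ofReal (‖x - y‖ ^ 2) ∂(μx x) := by
    have hsplit := lintegral_add_compl (fun p : Euc d × Euc d =>
      ENNReal.ofReal (‖p.1 - p.2‖ ^ 2)) hWm (μ := γ)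
    have hnull : ∫⁻ p in Wᶜ, ENNReal.ofReal (‖p.1 - p.2‖ ^ 2) ∂γ = 0 :=
      setLIntegral_measure_zero _ _ hWc
    rw [← hsplit, hnull, add_zero, hWA, lintegral_biUnion_finset hdisjA (fun x _ => hAm x)]
    refine Finset.sum_congr rfl fun x hx => ?_
    have hcong : ∫⁻ p in A x, ENNReal.ofReal (‖p.1 - p.2‖ ^ 2) ∂γ
        = ∫⁻ p in A x, ENNReal.ofReal (‖x - p.2‖ ^ 2) ∂γ := by
      refine setLIntegral_congr_fun (hAm x) ?_
      intro p hp
      dsimp only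
      rw [(hp : p.1 = x)]
    rw [hcong, hμxdef]
    rw [lintegral_map ?_ measurable_snd]
    exact (((continuous_const.sub continuous_id).norm.pow 2).measurable).ennreal_ofReal
  rw [hcostL, hcostR]

-- EReal helpers
lemma ereal_le_of_forall_add {a : EReal} {b : ℝ}
    (h : ∀ δ : ℝ, 0 < δ → a ≤ ((b + δ : ℝ) : EReal)) : a ≤ (b : EReal) := by
  induction a using EReal.rec with
  | bot => exact bot_le
  | coe r =>
    rw [EReal.coe_le_coe_iff]
    refine le_of_forall_pos_le_add fun δ hδ => ?_
    have := h δ hδ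
    rwa [EReal.coe_le_coe_iff] at this
  | top =>
    exact absurd (h 1 one_pos) (not_le.2 (EReal.coe_lt_top _))

lemma ereal_coe_ennreal_ne_top {w : ℝ≥0∞} (hw : w ≠ ⊤) :
    (w : EReal) = ((w.toReal : ℝ) : EReal) := by
  rw [← ENNReal.ofReal_toReal hw, EReal.coe_ennreal_ofReal,
    max_eq_left ENNReal.toReal_nonneg, ENNReal.toReal_ofReal ENNReal.toReal_nonneg]

lemma intEnergy_ne_bot (M : Set (Euc d)) (U : ℝ → ℝ) (μ : Measure (Euc d)) :
    intEnergy M U μ ≠ ⊥ := by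
  unfold intEnergy
  split_ifs
  · exact EReal.coe_ne_bot _
  · simp


end Helpers

/-- The Lagrangian and Eulerian Moreau–Yosida regularizations coincide:
`ℱ_ε(X_N) = 𝒰_ε((X_N)_#ρ0)` for any `X_N ∈ 𝕏_N`. -/
theorem statement2 {d N : ℕ} (M S0 : Set (Euc d)) (hM : IsCompact M)
    (U : ℝ → ℝ)
    (hUsmooth : ContDiffOn ℝ (⊤ : ℕ∞) U (Set.Ici 0))
    (hUconv : StrictConvexOn ℝ (Set.Ici 0) U)
    (hUsuper : Tendsto (fun r => U r / r) atTop atTop)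
    (ε : ℝ) (hε : 0 < ε)
    (ρ0 : Measure (Euc d)) [IsFiniteMeasure ρ0]
    (hac : ρ0 ≪ volume.restrict M) (hsupp : ρ0 S0ᶜ = 0)
    (P : Fin N → Set (Euc d)) (hpart : IsPartition S0 P)
    (XN : Euc d → Euc d) (hXN : PConst P XN) (hXNmem : memX ρ0 XN) :
    Feps M U ρ0 ε XN = Ueps M U ε (ρ0.map XN) := by
  have h2ε : (0:ℝ) < 2 * ε := by linarith
  set ρN := ρ0.map XN with hρN
  apply le_antisymm
  · -- Feps ≤ Ueps
    rw [Ueps]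
    refine le_iInf₂ fun μ hμ => ?_
    haveI : IsFiniteMeasure μ := hμ
    rw [EMYval]
    rcases subsingleton_or_nontrivial (Euc d) with hsub | hnt
    · -- subsingleton case
      rcases Set.eq_empty_or_nonempty (Couplings ρN μ) with hemp | ⟨γ, hγ⟩
      · have hW : W2sq ρN μ = ⊤ := by
          rw [W2sq, hemp]
          simp
        rw [hW, ENNReal.top_div_of_ne_top ENNReal.ofReal_ne_top,
          EReal.coe_ennreal_top, EReal.top_add_of_ne_bot (intEnergy_ne_bot M U μ)]
        exact le_top
      · obtain ⟨hγ1, hγ2⟩ := hγ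
        have hmass : ρN univ = μ univ := by
          rw [← hγ1, ← hγ2, Measure.map_apply measurable_fst MeasurableSet.univ,
            Measure.map_apply measurable_snd MeasurableSet.univ, preimage_univ,
            preimage_univ]
        have hXNid : XN = id := funext fun ω => Subsingleton.elim _ _
        have hρNid : ρN = ρ0 := by rw [hρN, hXNid, Measure.map_id]
        have hμρ : μ = ρ0 := by
          apply Measure.ext
          intro s _
          rcases Set.eq_empty_or_nonempty s with rfl | ⟨a, ha⟩
          · simp
          · have hsu : s = univ := eq_univ_of_forall fun b => (Subsingleton.elim a b) ▸ ha
            rw [hsu, ← hmass, hρNid]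
        have hidmem : memX ρ0 (id : Euc d → Euc d) := by
          constructor
          · exact aemeasurable_id
          · have : (id : Euc d → Euc d) = fun _ => (0 : Euc d) :=
              funext fun ω => Subsingleton.elim _ _
            rw [this]
            exact memLp_const _
        have hle : Feps M U ρ0 ε XN ≤ MYval M U ρ0 ε XN id := by
          rw [Feps]
          exact iInf₂_le _ hidmem
        refine le_trans hle ?_
        rw [MYval]
        have hL : L2dsq ρ0 XN id = 0 := by
          rw [L2dsq]
          have : ∀ ω : Euc d, ‖XN ω - ω‖ ^ 2 = 0 := fun ω => by
            rw [hXNid]; simp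
          simp [this]
        rw [hL, zero_div, EReal.coe_zero, Measure.map_id, ← hμρ, zero_add]
        exact le_add_of_nonneg_left (EReal.coe_ennreal_nonneg _)
    · -- nontrivial case: d ≥ 1
      haveI := hnt
      haveI : NullSingletonClass (volume : Measure (Euc d)) := inferInstance
      have hρatom : ∀ y : Euc d, ρ0 {y} = 0 := fun y =>
        hac (le_antisymm (le_trans (Measure.restrict_apply_le _ _)
          (le_of_eq (measure_singleton y))) zero_le)
      by_cases hE : μ ≪ volume.restrict M
      case neg =>
        have : intEnergy M U μ = ⊤ := by
          rw [intEnergy, if_neg hE]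
        rw [this, EReal.add_top_of_ne_bot (EReal.coe_ennreal_ne_bot _)]
        exact le_top
      case pos =>
        set r : ℝ := ∫ x in M, U ((μ.rnDeriv (volume.restrict M)) x).toReal with hr
        have hEr : intEnergy M U μ = (r : EReal) := by
          rw [intEnergy, if_pos hE]
        by_cases hWtop : W2sq ρN μ = ⊤
        case pos =>
          rw [hWtop, ENNReal.top_div_of_ne_top ENNReal.ofReal_ne_top,
            EReal.coe_ennreal_top, EReal.top_add_of_ne_bot (intEnergy_ne_bot M U μ)]
          exact le_top
        case neg =>
          have hdivtop : W2sq ρN μ / ENNReal.ofReal (2 * ε) ≠ ⊤ :=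
            (ENNReal.div_lt_top hWtop (by
              simp only [ne_eq, ENNReal.ofReal_eq_zero, not_le]
              exact h2ε)).ne
          rw [hEr, ereal_coe_ennreal_ne_top hdivtop, ← EReal.coe_add]
          apply ereal_le_of_forall_add
          intro δ hδ
          -- pick near-optimal coupling
          have hlt : W2sq ρN μ < W2sq ρN μ + ENNReal.ofReal (δ * (2 * ε)) :=
            ENNReal.lt_add_right hWtop (by
              simp only [ne_eq, ENNReal.ofReal_eq_zero, not_le]
              positivity)
          have hex : ∃ γ ∈ Couplings ρN μ,
              (∫⁻ p, ENNReal.ofReal (‖p.1 - p.2‖ ^ 2) ∂γ)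
                < W2sq ρN μ + ENNReal.ofReal (δ * (2 * ε)) := by
            by_contra hcon
            push_neg at hcon
            have : W2sq ρN μ + ENNReal.ofReal (δ * (2 * ε)) ≤ W2sq ρN μ := by
              rw [W2sq]
              exact le_iInf₂ hcon
            exact absurd (lt_of_lt_of_le hlt this) (lt_irrefl _)
          obtain ⟨γ, hγmem, hγcost⟩ := hex
          set C := ∫⁻ p, ENNReal.ofReal (‖p.1 - p.2‖ ^ 2) ∂γ with hC
          have hCtop : C ≠ ⊤ := hγcost.ne_top
          -- construct σ from the coupling
          have hρatom' := hρatom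
          set g := (hXNmem.1).mk XN with hg
          have hgmeas : Measurable g := (hXNmem.1).measurable_mk
          have hgae : XN =ᵐ[ρ0] g := (hXNmem.1).ae_eq_mk
          have hmapeq : ρ0.map XN = ρ0.map g := Measure.map_congr hgae
          have hfinim : (XN '' S0).Finite := by
            rw [← hpart.2, image_iUnion]
            refine Set.finite_iUnion fun i => Set.Subsingleton.finite ?_
            rintro a ⟨ωa, hωa, rfl⟩ b ⟨ωb, hωb, rfl⟩
            exact hXN i ωa hωa ωb hωb
          set V : Finset (Euc d) := hfinim.toFinset with hVdef
          have hV : ρ0 {ω | g ω ∉ V} = 0 := by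
            have hsub2 : {ω | g ω ∉ V} ⊆ {ω | XN ω ≠ g ω} ∪ S0ᶜ := by
              intro ω hω
              by_cases heq : XN ω = g ω
              · right
                intro hS0
                apply hω
                rw [hVdef, Set.Finite.mem_toFinset, ← heq]
                exact mem_image_of_mem XN hS0
              · exact Or.inl heq
            refine measure_mono_null hsub2 (measure_union_null (ae_iff.1 hgae) hsupp)
          obtain ⟨σ, hσmeas, hσmap, hσcost⟩ := exists_sigma ρ0 hρatom g hgmeas V hV μ γ
            (by rw [← hmapeq]; exact hγmem.1) hγmem.2
          -- σ is in 𝕏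
          have hgL2 : MemLp g 2 ρ0 := hXNmem.2.ae_eq hgae
          have hcost2 : ∫⁻ ω, ENNReal.ofReal (‖g ω - σ ω‖ ^ 2) ∂ρ0 = C := hσcost
          have hdiff : MemLp (fun ω => g ω - σ ω) 2 ρ0 := by
            refine ⟨(hgmeas.sub hσmeas).aestronglyMeasurable, ?_⟩
            rw [eLpNorm_lt_top_iff_lintegral_rpow_enorm_lt_top (by norm_num) (by norm_num)]
            have hconv : ∀ ω : Euc d, (‖g ω - σ ω‖ₑ) ^ ((2:ℝ≥0∞).toReal)
                = ENNReal.ofReal (‖g ω - σ ω‖ ^ 2) := by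
              intro ω
              rw [show ((2:ℝ≥0∞)).toReal = (2:ℝ) by norm_num, ← ofReal_norm,
                ENNReal.ofReal_rpow_of_nonneg (norm_nonneg _) (by norm_num : (0:ℝ) ≤ 2),
                Real.rpow_two]
            simp only [hconv]
            rw [hcost2]
            exact lt_of_le_of_ne le_top hCtop
          have hσL2 : MemLp σ 2 ρ0 := by
            have hrw : σ = fun ω => g ω - (g ω - σ ω) :=
              funext fun ω => (_root_.sub_sub_cancel _ _).symm
            rw [hrw]
            exact hgL2.sub hdiff
          have hFle : Feps M U ρ0 ε XN ≤ MYval M U ρ0 ε XN σ := by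
            rw [Feps]
            exact iInf₂_le σ ⟨hσmeas.aemeasurable, hσL2⟩
          refine le_trans hFle ?_
          rw [MYval, hσmap, hEr, ← EReal.coe_add, EReal.coe_le_coe_iff]
          -- numeric estimate
          have hLC : L2dsq ρ0 XN σ = C.toReal := by
            rw [L2dsq]
            have hae2 : (fun ω => ‖XN ω - σ ω‖ ^ 2) =ᵐ[ρ0] fun ω => ‖g ω - σ ω‖ ^ 2 :=
              hgae.mono fun ω hω => by simp only [hω]
            rw [integral_congr_ae hae2,
              integral_eq_lintegral_of_nonneg_ae (f := fun ω => ‖g ω - σ ω‖ ^ 2)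
                (Filter.Eventually.of_forall fun ω => sq_nonneg _)
                ((hgmeas.sub hσmeas).norm.pow_const 2).aestronglyMeasurable, hcost2]
          rw [hLC]
          have hWfin : (W2sq ρN μ + ENNReal.ofReal (δ * (2 * ε))) ≠ ⊤ :=
            ENNReal.add_ne_top.2 ⟨hWtop, ENNReal.ofReal_ne_top⟩
          have hCW : C.toReal ≤ (W2sq ρN μ).toReal + δ * (2 * ε) := by
            have := ENNReal.toReal_mono hWfin (le_of_lt hγcost)
            rwa [ENNReal.toReal_add hWtop ENNReal.ofReal_ne_top,
              ENNReal.toReal_ofReal (by positivity)] at this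
          have hdivW : (W2sq ρN μ / ENNReal.ofReal (2 * ε)).toReal
              = (W2sq ρN μ).toReal / (2 * ε) := by
            rw [ENNReal.toReal_div, ENNReal.toReal_ofReal (le_of_lt h2ε)]
          rw [hdivW]
          have hstep : C.toReal / (2 * ε) ≤ ((W2sq ρN μ).toReal + δ * (2 * ε)) / (2 * ε) := by
            gcongr
          have hsplit : ((W2sq ρN μ).toReal + δ * (2 * ε)) / (2 * ε)
              = (W2sq ρN μ).toReal / (2 * ε) + δ := by
            field_simp
          linarith [hstep, hsplit ▸ hstep]
  · -- Ueps ≤ Feps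
    rw [Feps]
    refine le_iInf₂ fun σ hσ => ?_
    obtain ⟨hσae, hσL2⟩ := hσ
    set μσ := ρ0.map σ with hμσ
    haveI : IsFiniteMeasure μσ := ⟨by
      rw [hμσ, Measure.map_apply_of_aemeasurable hσae MeasurableSet.univ, preimage_univ]
      exact measure_lt_top _ _⟩
    have h1 : Ueps M U ε ρN ≤ EMYval M U ε ρN μσ := by
      rw [Ueps]
      exact iInf₂_le μσ (by simp only [Set.mem_setOf_eq]; infer_instance)
    refine le_trans h1 ?_
    rw [EMYval, MYval]
    refine add_le_add ?_ le_rfl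
    -- W2sq bound via the graph coupling
    have hpair : AEMeasurable (fun ω => (XN ω, σ ω)) ρ0 := (hXNmem.1).prodMk hσae
    set γ := ρ0.map (fun ω => (XN ω, σ ω)) with hγ
    have hmem : γ ∈ Couplings ρN μσ := by
      constructor
      · rw [hγ, AEMeasurable.map_map_of_aemeasurable measurable_fst.aemeasurable hpair]
        rfl
      · rw [hγ, AEMeasurable.map_map_of_aemeasurable measurable_snd.aemeasurable hpair]
        rfl
    have hcost : ∫⁻ p, ENNReal.ofReal (‖p.1 - p.2‖ ^ 2) ∂γ
        = ∫⁻ ω, ENNReal.ofReal (‖XN ω - σ ω‖ ^ 2) ∂ρ0 := by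
      rw [hγ]
      exact lintegral_map'
        ((((continuous_fst.sub continuous_snd).norm.pow 2).measurable).ennreal_ofReal).aemeasurable
        hpair
    have hInt : Integrable (fun ω => ‖XN ω - σ ω‖ ^ 2) ρ0 := by
      have hm : MemLp (fun ω => XN ω - σ ω) 2 ρ0 := hXNmem.2.sub hσL2
      exact hm.norm.integrable_sq
    have hlin : ∫⁻ ω, ENNReal.ofReal (‖XN ω - σ ω‖ ^ 2) ∂ρ0
        = ENNReal.ofReal (L2dsq ρ0 XN σ) := by
      rw [L2dsq]
      exact (ofReal_integral_eq_lintegral_ofReal hInt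
        (Filter.Eventually.of_forall fun ω => sq_nonneg _)).symm
    have hWle : W2sq ρN μσ ≤ ENNReal.ofReal (L2dsq ρ0 XN σ) := by
      rw [W2sq]
      refine le_trans (iInf₂_le γ hmem) ?_
      rw [hcost, hlin]
    have hL2nonneg : 0 ≤ L2dsq ρ0 XN σ := integral_nonneg fun ω => sq_nonneg _
    calc ((W2sq ρN μσ / ENNReal.ofReal (2 * ε) : ℝ≥0∞) : EReal)
        ≤ ((ENNReal.ofReal (L2dsq ρ0 XN σ) / ENNReal.ofReal (2 * ε) : ℝ≥0∞) : EReal) := by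
          rw [EReal.coe_ennreal_le_coe_ennreal_iff]
          exact ENNReal.div_le_div_right hWle _
      _ = ((L2dsq ρ0 XN σ / (2 * ε) : ℝ) : EReal) := by
          rw [← ENNReal.ofReal_div_of_pos h2ε, EReal.coe_ennreal_ofReal,
            max_eq_left (div_nonneg hL2nonneg (le_of_lt h2ε))]
end
end

section
/- Let v ∈ C¹(M, ℝ^d) with v·n_{∂M} = 0 on ∂M, let Y : (−δ, δ) × M → M be its flow (solving ∂_s Y_s = v ∘ Y_s, Y_0 = Id), and let ρ be a bounded nonnegative density on M. Then the function s ↦ ∫_M U(ρ / det∇Y_s) det∇Y_s dx is differentiable at s = 0 with derivative −∫_M P(ρ) div v dx, where P(r) = rU'(r) − U(r). -/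
open MeasureTheory ENNReal Set Filter
open scoped RealInnerProductSpace Topology

set_option synthInstance.maxHeartbeats 1000000
set_option maxHeartbeats 2000000

noncomputable section

variable {d : ℕ}

lemma coord_norm_le (x : Euc d) (i : Fin d) : ‖x i‖ ≤ ‖x‖ := by
  rw [EuclideanSpace.norm_eq]
  rw [show ‖x i‖ = Real.sqrt (‖x i‖^2) from (Real.sqrt_sq (norm_nonneg _)).symm]
  exact Real.sqrt_le_sqrt
    (Finset.single_le_sum (f := fun j => ‖x j‖^2) (fun j _ => sq_nonneg _) (Finset.mem_univ i))

lemma abs_trace_le (A : Euc d →L[ℝ] Euc d) :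
    |LinearMap.trace ℝ (Euc d) (A : Euc d →ₗ[ℝ] Euc d)| ≤ d * ‖A‖ := by
  classical
  set b := EuclideanSpace.basisFun (Fin d) ℝ with hb
  rw [LinearMap.trace_eq_matrix_trace ℝ b.toBasis, Matrix.trace]
  have h : ∀ i : Fin d, |(LinearMap.toMatrix b.toBasis b.toBasis (A : Euc d →ₗ[ℝ] Euc d)).diag i| ≤ ‖A‖ := by
    intro i
    rw [Matrix.diag_apply, LinearMap.toMatrix_apply, OrthonormalBasis.coe_toBasis_repr_apply,
      EuclideanSpace.basisFun_repr]
    calc |((A (b.toBasis i)) : Euc d) i| ≤ ‖(A (b.toBasis i) : Euc d)‖ := coord_norm_le _ i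
      _ ≤ ‖A‖ * ‖(b.toBasis i : Euc d)‖ := A.le_opNorm _
      _ = ‖A‖ := by
          rw [OrthonormalBasis.coe_toBasis, b.orthonormal.1 i, mul_one]
  calc |∑ i, (LinearMap.toMatrix b.toBasis b.toBasis (A : Euc d →ₗ[ℝ] Euc d)).diag i|
      ≤ ∑ i, |(LinearMap.toMatrix b.toBasis b.toBasis (A : Euc d →ₗ[ℝ] Euc d)).diag i| :=
        Finset.abs_sum_le_sum_abs _ _
    _ ≤ ∑ _i : Fin d, ‖A‖ := Finset.sum_le_sum (fun i _ => h i)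
    _ = d * ‖A‖ := by simp [Finset.sum_const, mul_comm]

lemma exists_fderiv_bound {f : Euc d → Euc d} {M : Set (Euc d)} (hM : IsCompact M)
    (hf : ContDiffOn ℝ 1 f M) :
    ∃ C : ℝ, 0 ≤ C ∧ ∀ x ∈ interior M, ‖fderiv ℝ f x‖ ≤ C := by
  have hloc : ∀ a ∈ M, ∃ t : Set (Euc d), t ∈ 𝓝 a ∧ ∃ Ca : ℝ,
      ∀ y ∈ t ∩ interior M, ‖fderiv ℝ f y‖ ≤ Ca := by
    intro a ha
    have h1 : ContDiffWithinAt ℝ (0 + 1) f M a := by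
      rw [zero_add]; exact hf a ha
    rw [contDiffWithinAt_succ_iff_hasFDerivWithinAt (by simp)] at h1
    obtain ⟨u, hu, -, f', hf'd, hf'c⟩ := h1
    rw [Set.insert_eq_self.2 ha] at hu
    have hcont : ContinuousWithinAt f' u a := hf'c.continuousWithinAt
    have hev : ∀ᶠ y in 𝓝[u] a, ‖f' y‖ < ‖f' a‖ + 1 :=
      (hcont.norm).eventually_lt_const (by linarith)
    obtain ⟨S, hSmem, hS⟩ := eventually_iff_exists_mem.1 hev
    obtain ⟨t1, ht1o, hat1, ht1⟩ := mem_nhdsWithin.1 hSmem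
    obtain ⟨t2, ht2o, hat2, ht2u⟩ := mem_nhdsWithin.1 hu
    refine ⟨t1 ∩ t2, (ht1o.inter ht2o).mem_nhds ⟨hat1, hat2⟩, ‖f' a‖ + 1, ?_⟩
    rintro y ⟨⟨hy1, hy2⟩, hyi⟩
    have hyu : y ∈ u := ht2u ⟨hy2, interior_subset hyi⟩
    have hunhds : u ∈ 𝓝 y :=
      mem_nhds_iff.2 ⟨t2 ∩ interior M, fun z hz => ht2u ⟨hz.1, interior_subset hz.2⟩,
        ht2o.inter isOpen_interior, ⟨hy2, hyi⟩⟩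
    rw [((hf'd y hyu).hasFDerivAt hunhds).fderiv]
    exact le_of_lt (hS y (ht1 ⟨hy1, hyu⟩))
  choose t ht Ca hCa using hloc
  obtain ⟨I, hI⟩ := hM.elim_nhds_subcover' t ht
  have hBdd := (I.image (fun a : {x : Euc d // x ∈ M} => Ca a.1 a.2)).bddAbove
  obtain ⟨C0, hC0⟩ := hBdd
  refine ⟨max C0 0, le_max_right _ _, fun x hx => ?_⟩
  have hxM : x ∈ M := interior_subset hx
  have hex : ∃ a ∈ I, x ∈ t a.1 a.2 := by simpa using hI hxM
  obtain ⟨a, haI, hxa⟩ := hex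
  refine le_trans (hCa a.1 a.2 x ⟨hxa, hx⟩) (le_trans ?_ (le_max_left _ _))
  exact hC0 (Finset.mem_coe.2 (Finset.mem_image_of_mem _ haI))

lemma exists_divg_bound {v : Euc d → Euc d} {M : Set (Euc d)} (hM : IsCompact M)
    (hv : ContDiffOn ℝ 1 v M) :
    ∃ C : ℝ, 0 ≤ C ∧ ∀ x ∈ interior M, |divg v x| ≤ C := by
  obtain ⟨C, hC0, hC⟩ := exists_fderiv_bound hM hv
  refine ⟨d * C, by positivity, fun x hx => ?_⟩
  refine le_trans (abs_trace_le (fderiv ℝ v x)) ?_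
  have := hC x hx
  have hd : (0:ℝ) ≤ d := Nat.cast_nonneg d
  nlinarith

lemma measurable_divg (v : Euc d → Euc d) : Measurable (divg v) := by
  have hcont : Continuous fun A : Euc d →L[ℝ] Euc d => LinearMap.trace ℝ (Euc d) (A : Euc d →ₗ[ℝ] Euc d) :=
    ((LinearMap.trace ℝ (Euc d)).comp (ContinuousLinearMap.coeLM ℝ)).continuous_of_finiteDimensional
  exact hcont.measurable.comp (measurable_fderiv ℝ v)

/-- For a `C¹` vector field `v` tangent to `∂M` with flow `Y`, and `ρ` a
bounded nonnegative density on `M`, the map `s ↦ ∫_M U(ρ/det∇Y_s) det∇Y_s dx` is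
differentiable at `s = 0` with derivative `−∫_M P(ρ) div v dx`. -/
theorem statement6 {d : ℕ} (M : Set (Euc d)) (hM : IsCompact M)
    (hfr : volume (frontier M) = 0)
    (nB : Euc d → Euc d)  -- the outward unit normal to `∂M`
    (U : ℝ → ℝ)
    (hUsmooth : ContDiffOn ℝ (⊤ : ℕ∞) U (Set.Ici 0))
    (hUconv : StrictConvexOn ℝ (Set.Ici 0) U)
    (hUsuper : Tendsto (fun r => U r / r) atTop atTop)
    (v : Euc d → Euc d) (hv : ContDiffOn ℝ 1 v M)
    (hvbc : ∀ x ∈ frontier M, ⟪v x, nB x⟫ = 0)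
    (δ : ℝ) (hδ : 0 < δ)
    (Y : ℝ → Euc d → Euc d)
    (hY0 : ∀ x ∈ M, Y 0 x = x)
    (hflow : ∀ s ∈ Ioo (-δ) δ, ∀ x ∈ M, HasDerivAt (fun s' => Y s' x) (v (Y s x)) s)
    (hYdiffeo : ∀ s ∈ Ioo (-δ) δ, ContDiffOn ℝ 1 (Y s) M ∧ BijOn (Y s) M M)
    (hjac : ∀ s ∈ Ioo (-δ) δ, ∀ x ∈ M,
      HasDerivAt (fun s' => (fderiv ℝ (Y s') x).det)
        (divg v (Y s x) * (fderiv ℝ (Y s) x).det) s)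
    (ρ : Euc d → ℝ) (hρmeas : Measurable ρ) (hρnn : ∀ x, 0 ≤ ρ x)
    (hρbd : ∃ B : ℝ, ∀ x ∈ M, ρ x ≤ B) :
    HasDerivAt
      (fun s => ∫ x in M, U (ρ x / (fderiv ℝ (Y s) x).det) * (fderiv ℝ (Y s) x).det)
      (-∫ x in M, Pfun U (ρ x) * divg v x) 0 := by

  classical
  have hMmeas : MeasurableSet M := hM.isClosed.measurableSet
  haveI : IsFiniteMeasure (volume.restrict M) :=
    ⟨by rw [Measure.restrict_apply_univ]; exact hM.measure_lt_top⟩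
  obtain ⟨C, hC0, hC⟩ := exists_divg_bound hM hv
  set ε : ℝ := δ/2 with hεdef
  have hε0 : 0 < ε := by positivity
  have hεδ : ε < δ := by rw [hεdef]; linarith
  obtain ⟨B, hB⟩ := hρbd
  set B' : ℝ := max B 0 with hB'def
  have hB'0 : 0 ≤ B' := le_max_right _ _
  have hρB' : ∀ x ∈ M, ρ x ≤ B' := fun x hx => le_trans (hB x hx) (le_max_left _ _)
  set Uc : ℝ → ℝ := fun r => U (max r 0) with hUcdef
  have hUcont : ContinuousOn U (Ici 0) := hUsmooth.continuousOn
  have hUc_cont : Continuous Uc :=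
    hUcont.comp_continuous (continuous_id.max continuous_const) (fun r => Set.mem_Ici.2 (le_max_right _ _))
  have hUc_eq : ∀ r : ℝ, 0 ≤ r → Uc r = U r := by
    intro r hr
    show U (max r 0) = U r
    rw [max_eq_left hr]
  set D : ℝ → Euc d → ℝ := fun s x => (fderiv ℝ (Y s) x).det with hDdef
  have hDmeas : ∀ s, Measurable (D s) := fun s =>
    ContinuousLinearMap.continuous_det.measurable.comp (measurable_fderiv ℝ (Y s))
  have hD0 : ∀ x ∈ interior M, D 0 x = 1 := by
    intro x hx
    have hid : Y 0 =ᶠ[𝓝 x] id := by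
      filter_upwards [isOpen_interior.mem_nhds hx] with y hy
      exact hY0 y (interior_subset hy)
    show (fderiv ℝ (Y 0) x).det = 1
    rw [hid.fderiv_eq, fderiv_id]
    simp [ContinuousLinearMap.det]
  have hIoo : ∀ s : ℝ, |s| < δ → s ∈ Ioo (-δ) δ := by
    intro s hs
    exact ⟨(abs_lt.1 hs).1, (abs_lt.1 hs).2⟩
  -- main bootstrap lemma
  have boot : ∀ x ∈ interior M, ∀ σ : ℝ, (σ = 1 ∨ σ = -1) → ∀ t ∈ Icc (0:ℝ) ε,
      Y (σ*t) x ∈ interior M ∧ 0 < D (σ*t) x ∧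
        Real.exp (-(C*t)) ≤ D (σ*t) x ∧ D (σ*t) x ≤ Real.exp (C*t) := by
    intro x hx σ hσ
    have hxM : x ∈ M := interior_subset hx
    have hσ1 : |σ| = 1 := by rcases hσ with h|h <;> simp [h]
    have hmem : ∀ t ∈ Icc (0:ℝ) ε, σ*t ∈ Ioo (-δ) δ := by
      intro t ht
      apply hIoo
      rw [abs_mul, hσ1, one_mul, abs_of_nonneg ht.1]
      exact lt_of_le_of_lt ht.2 hεδ
    set φ : ℝ → ℝ := fun s => D s x with hφdef
    have hφ0 : φ 0 = 1 := hD0 x hx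
    have hder : ∀ s ∈ Ioo (-δ) δ, HasDerivAt φ (divg v (Y s x) * φ s) s :=
      fun s hs => hjac s hs x hxM
    set Bset : Set ℝ := {t | Y (σ*t) x ∈ interior M ∧ 0 < φ (σ*t)} with hBsetdef
    have h0B : (0:ℝ) ∈ Bset := by
      constructor
      · rw [mul_zero, hY0 x hxM]; exact hx
      · rw [mul_zero, hφ0]; norm_num
    have hφσ : ∀ w : ℝ, σ*w ∈ Ioo (-δ) δ →
        HasDerivAt (fun u => φ (σ*u)) (divg v (Y (σ*w) x) * φ (σ*w) * σ) w := by
      intro w hw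
      have h1 : HasDerivAt (fun u => φ (σ*u)) (divg v (Y (σ*w) x) * φ (σ*w) * (σ*1)) w :=
        HasDerivAt.comp w (hder (σ*w) hw) ((hasDerivAt_id w).const_mul σ)
      simpa using h1
    have grow : ∀ t ∈ Icc (0:ℝ) ε, Icc (0:ℝ) t ⊆ Bset →
        ∀ u ∈ Icc (0:ℝ) t, Real.exp (-(C*u)) ≤ φ (σ*u) ∧ φ (σ*u) ≤ Real.exp (C*u) := by
      intro t ht hB2 u hu
      set ψ : ℝ → ℝ := fun w => Real.log (φ (σ*w)) with hψdef
      have hd : ∀ w ∈ Icc (0:ℝ) t, HasDerivWithinAt ψ (divg v (Y (σ*w) x) * σ) (Icc (0:ℝ) t) w := by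
        intro w hw
        have hwB := hB2 hw
        have hwI : σ*w ∈ Ioo (-δ) δ := hmem w ⟨hw.1, le_trans hw.2 ht.2⟩
        have h2 := (Real.hasDerivAt_log (ne_of_gt hwB.2)).comp w (hφσ w hwI)
        have h3 : (φ (σ*w))⁻¹ * (divg v (Y (σ*w) x) * φ (σ*w) * σ) = divg v (Y (σ*w) x) * σ := by
          have hne : φ (σ*w) ≠ 0 := ne_of_gt hwB.2
          field_simp
        rw [h3] at h2
        exact h2.hasDerivWithinAt
      have hbound : ∀ w ∈ Icc (0:ℝ) t, ‖divg v (Y (σ*w) x) * σ‖ ≤ C := by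
        intro w hw
        rw [Real.norm_eq_abs, abs_mul, hσ1, mul_one]
        exact hC _ (hB2 hw).1
      have key := Convex.norm_image_sub_le_of_norm_hasDerivWithin_le hd hbound (convex_Icc 0 t)
        (left_mem_Icc.2 (le_trans hu.1 hu.2)) hu
      have hψ0 : ψ 0 = 0 := by
        show Real.log (φ (σ*0)) = 0
        rw [mul_zero, hφ0, Real.log_one]
      rw [hψ0, sub_zero, sub_zero, Real.norm_eq_abs, Real.norm_eq_abs, abs_of_nonneg hu.1] at key
      have hupos := (hB2 hu).2
      have hlog : |Real.log (φ (σ*u))| ≤ C*u := key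
      constructor
      · rw [← Real.exp_log hupos]
        exact Real.exp_le_exp.2 (by linarith [(abs_le.1 hlog).1])
      · rw [← Real.exp_log hupos]
        exact Real.exp_le_exp.2 (le_of_abs_le hlog)
    set G : Set ℝ := {t | t ∈ Icc (0:ℝ) ε ∧ Icc (0:ℝ) t ⊆ Bset} with hGdef
    have hG0 : (0:ℝ) ∈ G := by
      refine ⟨⟨le_rfl, le_of_lt hε0⟩, fun u hu => ?_⟩
      rw [show u = 0 from le_antisymm hu.2 hu.1]
      exact h0B
    have hGne : G.Nonempty := ⟨0, hG0⟩
    have hGbdd : BddAbove G := ⟨ε, fun t ht => ht.1.2⟩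
    set T := sSup G with hTdef
    have hT0 : 0 ≤ T := le_csSup hGbdd hG0
    have hTε : T ≤ ε := csSup_le hGne (fun t ht => ht.1.2)
    have hIco : Ico (0:ℝ) T ⊆ Bset := by
      intro u hu
      obtain ⟨t, htG, hut⟩ := exists_lt_of_lt_csSup hGne hu.2
      exact htG.2 ⟨hu.1, le_of_lt hut⟩
    have hTmem : σ*T ∈ Ioo (-δ) δ := hmem T ⟨hT0, hTε⟩
    have hTB : T ∈ Bset := by
      rcases eq_or_lt_of_le hT0 with h0T | h0T
      · rw [← h0T]; exact h0B
      · have hcont : ContinuousAt (fun u => φ (σ*u)) T := (hφσ T hTmem).continuousAt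
        have hφTpos : Real.exp (-(C*T)) ≤ φ (σ*T) := by
          have htend : Tendsto (fun u => φ (σ*u)) (𝓝[<] T) (𝓝 (φ (σ*T))) :=
            hcont.tendsto.mono_left nhdsWithin_le_nhds
          refine ge_of_tendsto htend ?_
          filter_upwards [Ioo_mem_nhdsLT_of_mem (show T ∈ Ioc (0:ℝ) T from ⟨h0T, le_rfl⟩)] with u hu
          have hu1 : u ∈ Icc (0:ℝ) ε := ⟨le_of_lt hu.1, le_trans (le_of_lt hu.2) hTε⟩
          have hsub : Icc (0:ℝ) u ⊆ Bset := fun w hw => hIco ⟨hw.1, lt_of_le_of_lt hw.2 hu.2⟩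
          refine le_trans ?_ (grow u hu1 hsub u ⟨le_of_lt hu.1, le_rfl⟩).1
          apply Real.exp_le_exp.2
          nlinarith [hu.2.le, hC0]
        have hφTpos' : 0 < φ (σ*T) := lt_of_lt_of_le (Real.exp_pos _) hφTpos
        have hYTM : Y (σ*T) x ∈ M := (hYdiffeo (σ*T) hTmem).2.mapsTo hxM
        have hca : ContDiffAt ℝ 1 (Y (σ*T)) x :=
          (hYdiffeo (σ*T) hTmem).1.contDiffAt (mem_interior_iff_mem_nhds.1 hx)
        have hstrict := hca.hasStrictFDerivAt one_ne_zero
        have hdet : LinearMap.det ((fderiv ℝ (Y (σ*T)) x : Euc d →L[ℝ] Euc d) : Euc d →ₗ[ℝ] Euc d) ≠ 0 :=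
          ne_of_gt hφTpos'
        set e := (LinearMap.equivOfDetNeZero _ hdet).toContinuousLinearEquiv with hedef
        have heA : (e : Euc d →L[ℝ] Euc d) = fderiv ℝ (Y (σ*T)) x := by
          ext y; rfl
        have hstrict' : HasStrictFDerivAt (Y (σ*T)) ((e : Euc d ≃L[ℝ] Euc d) : Euc d →L[ℝ] Euc d) x := by
          rw [heA]; exact hstrict
        have hmapn : Filter.map (Y (σ*T)) (𝓝 x) = 𝓝 (Y (σ*T) x) :=
          hstrict'.map_nhds_eq_of_equiv
        have hMn : M ∈ 𝓝 (Y (σ*T) x) := by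
          rw [← hmapn]
          exact Filter.mem_map.2 (mem_of_superset (mem_interior_iff_mem_nhds.1 hx)
            (fun y hy => (hYdiffeo (σ*T) hTmem).2.mapsTo hy))
        exact ⟨mem_interior_iff_mem_nhds.2 hMn, hφTpos'⟩
    have hTG : T ∈ G := by
      refine ⟨⟨hT0, hTε⟩, fun u hu => ?_⟩
      rcases lt_or_eq_of_le hu.2 with h | h
      · exact hIco ⟨hu.1, h⟩
      · rw [h]; exact hTB
    have hTeq : T = ε := by
      by_contra hne
      have hTlt : T < ε := lt_of_le_of_ne hTε hne
      have hc1 : ContinuousAt (fun u => Y (σ*u) x) T := by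
        have h1 : ContinuousAt (fun s => Y s x) (σ*T) := (hflow (σ*T) hTmem x hxM).continuousAt
        exact h1.comp ((continuous_const.mul continuous_id).continuousAt)
      have hc2 : ContinuousAt (fun u => φ (σ*u)) T := (hφσ T hTmem).continuousAt
      have hev : ∀ᶠ u in 𝓝 T, u ∈ Bset := by
        filter_upwards [hc1.eventually_mem (isOpen_interior.mem_nhds hTB.1),
          hc2.eventually_const_lt hTB.2] with u h1 h2
        exact ⟨h1, h2⟩
      obtain ⟨η, hη0, hball⟩ := Metric.eventually_nhds_iff_ball.1 hev
      have hTt' : T < min ε (T + η/2) := lt_min hTlt (by linarith)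
      have ht'G : min ε (T + η/2) ∈ G := by
        refine ⟨⟨le_trans hT0 (le_of_lt hTt'), min_le_left _ _⟩, fun u hu => ?_⟩
        rcases le_or_gt u T with h | h
        · exact hTG.2 ⟨hu.1, h⟩
        · refine hball u ?_
          rw [Metric.mem_ball, Real.dist_eq, abs_of_pos (by linarith : (0:ℝ) < u - T)]
          have h2 : u ≤ T + η/2 := le_trans hu.2 (min_le_right _ _)
          linarith
      exact absurd (le_csSup hGbdd ht'G) (not_le.2 hTt')
    intro t ht
    have hIccB : Icc (0:ℝ) t ⊆ Bset := by
      intro u hu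
      exact (hTeq ▸ hTG).2 ⟨hu.1, le_trans hu.2 ht.2⟩
    have htB := hIccB (right_mem_Icc.mpr ht.1)
    have hg := grow t ht hIccB t ⟨ht.1, le_rfl⟩
    exact ⟨htB.1, htB.2, hg.1, hg.2⟩
  -- symmetric version
  have keyP : ∀ x ∈ interior M, ∀ s ∈ Icc (-ε) ε,
      Y s x ∈ interior M ∧ 0 < D s x ∧
        Real.exp (-(C*ε)) ≤ D s x ∧ D s x ≤ Real.exp (C*ε) := by
    intro x hx s hs
    have hmono : ∀ t : ℝ, 0 ≤ t → t ≤ ε →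
        Real.exp (-(C*ε)) ≤ Real.exp (-(C*t)) ∧ Real.exp (C*t) ≤ Real.exp (C*ε) := by
      intro t h1 h2
      constructor <;> apply Real.exp_le_exp.2 <;> nlinarith [hC0]
    rcases le_or_gt 0 s with h | h
    · have hres := boot x hx 1 (Or.inl rfl) s ⟨h, hs.2⟩
      rw [one_mul] at hres
      exact ⟨hres.1, hres.2.1, le_trans (hmono s h hs.2).1 hres.2.2.1,
        le_trans hres.2.2.2 (hmono s h hs.2).2⟩
    · have hs' : -s ∈ Icc (0:ℝ) ε := ⟨by linarith, by linarith [hs.1]⟩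
      have hres := boot x hx (-1) (Or.inr rfl) (-s) hs'
      rw [show (-1:ℝ)*(-s) = s by ring] at hres
      exact ⟨hres.1, hres.2.1, le_trans (hmono (-s) hs'.1 hs'.2).1 hres.2.2.1,
        le_trans hres.2.2.2 (hmono (-s) hs'.1 hs'.2).2⟩
  -- bound on the pressure
  set R : ℝ := B' * Real.exp (C*ε) with hRdef
  have hR0 : 0 ≤ R := by positivity
  obtain ⟨Q, hQ0, hQ⟩ : ∃ Q : ℝ, 0 ≤ Q ∧ ∀ r ∈ Icc (0:ℝ) R, |Pfun U r| ≤ Q := by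
    set Qf : ℝ → ℝ := fun r => r * derivWithin U (Ici 0) r - U r with hQfdef
    have hQcont : ContinuousOn Qf (Icc 0 R) := by
      apply ContinuousOn.sub
      · exact continuousOn_id.mul
          ((hUsmooth.continuousOn_derivWithin (uniqueDiffOn_Ici 0) (by simp)).mono Icc_subset_Ici_self)
      · exact hUcont.mono Icc_subset_Ici_self
    obtain ⟨Q0, hQ0'⟩ := isCompact_Icc.exists_bound_of_continuousOn hQcont
    refine ⟨max Q0 0, le_max_right _ _, fun r hr => ?_⟩
    have heq : Pfun U r = Qf r := by
      rcases eq_or_lt_of_le hr.1 with h0 | h0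
      · show r * deriv U r - U r = r * derivWithin U (Ici 0) r - U r
        rw [← h0]; ring
      · show r * deriv U r - U r = r * derivWithin U (Ici 0) r - U r
        rw [derivWithin_of_mem_nhds (Ici_mem_nhds h0)]
    rw [heq]
    exact le_trans (by simpa [Real.norm_eq_abs] using hQ0' r hr) (le_max_left _ _)
  set K : ℝ := Q * (C * Real.exp (C*ε)) with hKdef
  -- a.e. facts
  have aeInt : ∀ᵐ x ∂(volume.restrict M), x ∈ interior M := by
    rw [ae_iff, Measure.restrict_apply' hMmeas]
    refine measure_mono_null ?_ hfr
    intro y hy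
    exact ⟨subset_closure hy.2, hy.1⟩
  have aeM : ∀ᵐ x ∂(volume.restrict M), x ∈ M := ae_restrict_mem hMmeas
  have hball2Icc : ∀ s : ℝ, s ∈ Metric.ball (0:ℝ) ε → s ∈ Icc (-ε) ε := by
    intro s hs
    have h := Metric.mem_ball.1 hs
    rw [Real.dist_eq, sub_zero] at h
    exact ⟨(abs_lt.1 h).1.le, (abs_lt.1 h).2.le⟩
  set F' : ℝ → Euc d → ℝ := fun s x => -(Pfun U (ρ x / D s x) * (divg v (Y s x) * D s x)) with hF'def
  -- hypotheses of the dominated convergence lemma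
  have hmeasF : ∀ᶠ s in 𝓝 (0:ℝ), AEStronglyMeasurable (fun x => U (ρ x / D s x) * D s x)
      (volume.restrict M) := by
    filter_upwards [Metric.ball_mem_nhds (0:ℝ) hε0] with s hs
    have hmeas : Measurable fun x => Uc (ρ x / D s x) * D s x :=
      (hUc_cont.measurable.comp (hρmeas.div (hDmeas s))).mul (hDmeas s)
    apply hmeas.aestronglyMeasurable.congr
    filter_upwards [aeInt] with x hx
    have hpos := (keyP x hx s (hball2Icc s hs)).2.1
    rw [hUc_eq _ (div_nonneg (hρnn x) hpos.le)]
  have hintF : Integrable (fun x => U (ρ x / D 0 x) * D 0 x) (volume.restrict M) := by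
    have hmeas : Measurable fun x => Uc (ρ x) := hUc_cont.measurable.comp hρmeas
    obtain ⟨cU, hcU⟩ := (isCompact_Icc (a := (0:ℝ)) (b := B')).exists_bound_of_continuousOn
      (hUcont.mono Icc_subset_Ici_self)
    have hint : Integrable (fun x => Uc (ρ x)) (volume.restrict M) := by
      apply Integrable.mono' (integrable_const cU) hmeas.aestronglyMeasurable
      filter_upwards [aeM] with x hxM
      rw [Real.norm_eq_abs, hUc_eq _ (hρnn x)]
      simpa [Real.norm_eq_abs] using hcU (ρ x) ⟨hρnn x, hρB' x hxM⟩
    apply hint.congr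
    filter_upwards [aeInt] with x hx
    rw [hD0 x hx, div_one, mul_one, hUc_eq _ (hρnn x)]
  have hmeasF' : AEStronglyMeasurable (F' 0) (volume.restrict M) := by
    have hmeas : Measurable fun x => -((ρ x * deriv U (ρ x) - Uc (ρ x)) * divg v x) :=
      (((hρmeas.mul ((measurable_deriv U).comp hρmeas)).sub
        (hUc_cont.measurable.comp hρmeas)).mul (measurable_divg v)).neg
    apply hmeas.aestronglyMeasurable.congr
    filter_upwards [aeInt] with x hx
    show -((ρ x * deriv U (ρ x) - Uc (ρ x)) * divg v x)
        = -(Pfun U (ρ x / D 0 x) * (divg v (Y 0 x) * D 0 x))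
    rw [hD0 x hx, hY0 x (interior_subset hx), div_one, mul_one, hUc_eq _ (hρnn x)]
    rfl
  have hbnd : ∀ᵐ x ∂(volume.restrict M), ∀ s ∈ Metric.ball (0:ℝ) ε, ‖F' s x‖ ≤ K := by
    filter_upwards [aeInt, aeM] with x hx hxM
    intro s hs
    obtain ⟨hYint, hDpos, hDlo, hDhi⟩ := keyP x hx s (hball2Icc s hs)
    have hr0 : 0 ≤ ρ x / D s x := div_nonneg (hρnn x) hDpos.le
    have hinv : (D s x)⁻¹ ≤ Real.exp (C*ε) := by
      have h1 : (D s x)⁻¹ ≤ (Real.exp (-(C*ε)))⁻¹ := by gcongr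
      rwa [Real.exp_neg, inv_inv] at h1
    have hrR : ρ x / D s x ≤ R := by
      calc ρ x / D s x = ρ x * (D s x)⁻¹ := div_eq_mul_inv _ _
        _ ≤ B' * Real.exp (C*ε) :=
            mul_le_mul (hρB' x hxM) hinv (inv_nonneg.2 hDpos.le) hB'0
    have hPr : |Pfun U (ρ x / D s x)| ≤ Q := hQ _ ⟨hr0, hrR⟩
    have hgb : |divg v (Y s x)| ≤ C := hC _ hYint
    rw [Real.norm_eq_abs]
    show |-(Pfun U (ρ x / D s x) * (divg v (Y s x) * D s x))| ≤ K
    rw [abs_neg, abs_mul, abs_mul, abs_of_pos hDpos]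
    calc |Pfun U (ρ x / D s x)| * (|divg v (Y s x)| * D s x)
        ≤ Q * (C * Real.exp (C*ε)) := by
          apply mul_le_mul hPr ?_ (mul_nonneg (abs_nonneg _) hDpos.le) hQ0
          exact mul_le_mul hgb hDhi hDpos.le hC0
      _ = K := rfl
  have hdiff : ∀ᵐ x ∂(volume.restrict M), ∀ s ∈ Metric.ball (0:ℝ) ε,
      HasDerivAt (fun s' => U (ρ x / D s' x) * D s' x) (F' s x) s := by
    filter_upwards [aeInt] with x hx
    intro s hs
    have hsI : s ∈ Icc (-ε) ε := hball2Icc s hs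
    have hxM : x ∈ M := interior_subset hx
    have hsδ : s ∈ Ioo (-δ) δ := ⟨by linarith [hsI.1], lt_of_le_of_lt hsI.2 hεδ⟩
    have hD' : HasDerivAt (fun s' => D s' x) (divg v (Y s x) * D s x) s := hjac s hsδ x hxM
    have hDpos := (keyP x hx s hsI).2.1
    rcases eq_or_lt_of_le (hρnn x) with h0 | h0
    · have hfun : (fun s' => U (ρ x / D s' x) * D s' x) = fun s' => U 0 * D s' x := by
        funext s'; rw [← h0, zero_div]
      rw [hfun]
      have hP0 : F' s x = U 0 * (divg v (Y s x) * D s x) := by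
        show -(Pfun U (ρ x / D s x) * (divg v (Y s x) * D s x)) = _
        rw [← h0, zero_div]
        show -((0 * deriv U 0 - U 0) * (divg v (Y s x) * D s x)) = _
        ring
      rw [hP0]
      exact hD'.const_mul (U 0)
    · have hrpos : 0 < ρ x / D s x := div_pos h0 hDpos
      have hUd : HasDerivAt U (deriv U (ρ x / D s x)) (ρ x / D s x) :=
        ((hUsmooth.contDiffAt (Ici_mem_nhds hrpos)).differentiableAt (by simp)).hasDerivAt
      have hq : HasDerivAt (fun s' => ρ x / D s' x)
          ((0 * D s x - ρ x * (divg v (Y s x) * D s x)) / D s x ^ 2) s :=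
        (hasDerivAt_const s (ρ x)).div hD' hDpos.ne'
      have hcomp' : HasDerivAt (fun s' => U (ρ x / D s' x) * D s' x)
          (deriv U (ρ x / D s x) * ((0 * D s x - ρ x * (divg v (Y s x) * D s x)) / D s x ^ 2)
              * D s x
            + U (ρ x / D s x) * (divg v (Y s x) * D s x)) s := (hUd.comp s hq).mul hD'
      have heq : deriv U (ρ x / D s x) * ((0 * D s x - ρ x * (divg v (Y s x) * D s x)) / D s x ^ 2)
              * D s x
            + U (ρ x / D s x) * (divg v (Y s x) * D s x) = F' s x := by
        show _ = -(Pfun U (ρ x / D s x) * (divg v (Y s x) * D s x))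
        show _ = -((ρ x / D s x * deriv U (ρ x / D s x) - U (ρ x / D s x))
            * (divg v (Y s x) * D s x))
        field_simp
        ring
      rw [← heq]
      exact hcomp'
  have main := (hasDerivAt_integral_of_dominated_loc_of_deriv_le (Metric.ball_mem_nhds 0 hε0) hmeasF hintF hmeasF'
    hbnd (integrable_const K) hdiff).2
  have hval : ∫ x in M, F' 0 x = -∫ x in M, Pfun U (ρ x) * divg v x := by
    rw [← integral_neg]
    apply integral_congr_ae
    filter_upwards [aeInt] with x hx
    show -(Pfun U (ρ x / D 0 x) * (divg v (Y 0 x) * D 0 x)) = -(Pfun U (ρ x) * divg v x)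
    rw [hD0 x hx, hY0 x (interior_subset hx), div_one, mul_one]
  rw [hval] at main
  exact main
end
end
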